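/- Every finite simple graph with maximum degree at most Δ can be edge-partitioned into at most Δ star forests (forests in which every connected component is a star). -/

import Mathlib

open SimpleGraph

/-- A graph is a star forest if it is acyclic and contains no path on four vertices,
i.e., every connected component is a star. -/
def IsStarForest {V : Type*} (H : SimpleGraph V) : Prop :=
  H.IsAcyclic ∧ ∀ a b c d : V, H.Adj a b → H.Adj b c → H.Adj c d → a = c ∨ b = d

/-- The subgraph of `G` consisting of the edges of `G` receiving color `i` under `f`. -/
def colorClass {V : Type*} {β : Type*} (G : SimpleGraph V) (f : Sym2 V → β) (i : β) :
    SimpleGraph V :=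
  SimpleGraph.fromEdgeSet {e | e ∈ G.edgeSet ∧ f e = i}

/-!
Delete all edges at a vertex `v`, color the rest inductively, and give each edge `vu` a color
that does not occur at `u`; one exists since `u` has at most `Δ - 1` other edges. In every
color class the new edges then form a star centred at `v` whose leaves are isolated in the old
class, so no path with three edges arises.
-/

theorem Finset.exists_lt_forall_ne_of_card_lt {α : Type*} (s : Finset α) (g : α → ℕ) {k : ℕ}
    (hs : s.card < k) : ∃ c < k, ∀ a ∈ s, g a ≠ c := by
  classical
  obtain ⟨c, hc, hcs⟩ := Finset.exists_mem_notMem_of_card_lt_card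
    ((Finset.card_image_le (s := s) (f := g)).trans_lt (hs.trans_eq (Finset.card_range k).symm))
  exact ⟨c, Finset.mem_range.mp hc, fun a ha hac => hcs (hac ▸ Finset.mem_image_of_mem g ha)⟩

namespace SimpleGraph

variable {V : Type*}

def P4Free (H : SimpleGraph V) : Prop :=
  ∀ a b c d : V, H.Adj a b → H.Adj b c → H.Adj c d → a = c ∨ b = d

theorem P4Free.isAcyclic {H : SimpleGraph V} (hH : H.P4Free) : H.IsAcyclic := by
  intro u c hc
  -- `match` uses `hlen` to discard the walks of length less than three
  have hlen := hc.three_le_length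
  match c, hc with
  | .cons hab (.cons hbc (.cons hcd q)), hc =>
    have hnd := hc.support_nodup
    simp only [Walk.support_cons, List.tail_cons, List.nodup_cons, List.mem_cons] at hnd
    rcases hH _ _ _ _ hab hbc hcd with rfl | rfl
    · exact hnd.2.1 q.end_mem_support
    · exact hnd.1 (Or.inr q.start_mem_support)

theorem P4Free.isStarForest {H : SimpleGraph V} (hH : H.P4Free) : IsStarForest H :=
  ⟨hH.isAcyclic, hH⟩

theorem P4Free.sup_star {H K : SimpleGraph V} (hH : H.P4Free) {v : V}
    (hK : ∀ a b, K.Adj a b → a = v ∨ b = v) (hdisj : Disjoint H.support K.support) :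
    (H ⊔ K).P4Free := by
  have hH_K : ∀ {a b c}, H.Adj a b → ¬ K.Adj a c := fun hab hac =>
    Set.disjoint_left.mp hdisj ⟨_, hab⟩ ⟨_, hac⟩
  intro a b c d hab hbc hcd
  have hba := hab.symm
  rw [sup_adj] at hab hba hbc hcd
  rcases hbc with hbc | hbc
  · have hab : H.Adj a b := hab.resolve_right fun h => hH_K hbc h.symm
    have hcd : H.Adj c d := hcd.resolve_right (hH_K hbc.symm)
    exact hH a b c d hab hbc hcd
  · rcases hK b c hbc with rfl | rfl
    · have hcd : K.Adj c d := hcd.resolve_left fun h => hH_K h hbc.symm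
      exact Or.inr ((hK c d hcd).resolve_left hbc.ne').symm
    · have hba : K.Adj b a := hba.resolve_left fun h => hH_K h hbc
      exact Or.inl ((hK b a hba).resolve_left hbc.ne)

theorem colorClass_adj {β : Type*} (G : SimpleGraph V) (f : Sym2 V → β) (i : β) {a b : V} :
    (colorClass G f i).Adj a b ↔ G.Adj a b ∧ f s(a, b) = i := by
  simp only [colorClass, fromEdgeSet_adj, Set.mem_ofPred_eq, mem_edgeSet]
  exact ⟨fun h => h.1, fun h => ⟨h, h.1.ne⟩⟩

noncomputable def recolorAt (f : Sym2 V → ℕ) (v : V) (c : V → ℕ) (e : Sym2 V) : ℕ :=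
  open Classical in if h : v ∈ e then c (Sym2.Mem.other h) else f e

theorem recolorAt_mk_left (f : Sym2 V → ℕ) (v : V) (c : V → ℕ) (u : V) :
    recolorAt f v c s(v, u) = c u := by
  rw [recolorAt, dif_pos (Sym2.mem_mk_left v u)]
  exact congrArg c (Sym2.congr_right.mp (Sym2.other_spec _))

theorem recolorAt_mk_right (f : Sym2 V → ℕ) (v : V) (c : V → ℕ) (u : V) :
    recolorAt f v c s(u, v) = c u := by
  rw [Sym2.eq_swap, recolorAt_mk_left]

theorem recolorAt_of_notMem (f : Sym2 V → ℕ) {v : V} (c : V → ℕ) {e : Sym2 V} (he : v ∉ e) :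
    recolorAt f v c e = f e := by
  rw [recolorAt, dif_neg he]

theorem colorClass_recolorAt (G : SimpleGraph V) (f : Sym2 V → ℕ) (v : V) (c : V → ℕ) (i : ℕ) :
    colorClass G (recolorAt f v c) i = colorClass (G.deleteIncidenceSet v) f i ⊔
      fromRel fun a b => a = v ∧ G.Adj v b ∧ c b = i := by
  ext a b
  simp only [sup_adj, colorClass_adj, deleteIncidenceSet_adj, fromRel_adj]
  by_cases ha : a = v
  · subst ha
    rw [recolorAt_mk_left]
    grind [Adj.ne]
  by_cases hb : b = v
  · subst hb
    rw [recolorAt_mk_right]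
    grind [Adj.symm, Adj.ne]
  · rw [recolorAt_of_notMem f c (by simp [Ne.symm ha, Ne.symm hb])]
    grind

theorem exists_recolorAt_p4Free (G : SimpleGraph V) [G.LocallyFinite] {Δ : ℕ}
    (hΔ : ∀ u, G.degree u ≤ Δ) (v : V) {f : Sym2 V → ℕ}
    (hf : ∀ e ∈ (G.deleteIncidenceSet v).edgeSet, f e < Δ)
    (hfP4 : ∀ i, (colorClass (G.deleteIncidenceSet v) f i).P4Free) :
    ∃ g : Sym2 V → ℕ, (∀ e ∈ G.edgeSet, g e < Δ) ∧ ∀ i, (colorClass G g i).P4Free := by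
  have hfree : ∀ u, ∃ k, G.Adj v u → k < Δ ∧ ∀ w, G.Adj u w → w ≠ v → f s(u, w) ≠ k := by
    intro u
    by_cases hvu : G.Adj v u
    · classical
      have hcard : ((G.neighborFinset u).erase v).card < Δ := by
        rw [Finset.card_erase_of_mem (by simpa using hvu.symm), card_neighborFinset_eq_degree]
        have := (G.degree_pos_iff_exists_adj u).mpr ⟨v, hvu.symm⟩
        have := hΔ u
        omega
      obtain ⟨k, hk, hne⟩ := Finset.exists_lt_forall_ne_of_card_lt _ (fun w => f s(u, w)) hcard
      exact ⟨k, fun _ => ⟨hk, fun w huw hwv => hne w (by simp [huw, hwv])⟩⟩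
    · exact ⟨0, fun h => (hvu h).elim⟩
  choose c hc using hfree
  refine ⟨recolorAt f v c, fun e he => ?_, fun i => ?_⟩
  · by_cases hve : v ∈ e
    · rw [← Sym2.other_spec hve] at he ⊢
      rw [recolorAt_mk_left]
      exact (hc _ he).1
    · rw [recolorAt_of_notMem f c hve]
      exact hf e (by rw [edgeSet_deleteIncidenceSet]; exact ⟨he, fun h => hve h.2⟩)
  · rw [colorClass_recolorAt]
    refine (hfP4 i).sup_star (v := v) ?_ (Set.disjoint_left.mpr ?_)
    · rintro a b ⟨-, ⟨rfl, -⟩ | ⟨rfl, -⟩⟩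
      exacts [Or.inl rfl, Or.inr rfl]
    · intro a haH haK
      obtain ⟨w, haw⟩ := (mem_support _).mp haH
      rw [colorClass_adj, deleteIncidenceSet_adj] at haw
      obtain ⟨b, -, ⟨rfl, -⟩ | ⟨-, hva, hca⟩⟩ := (mem_support _).mp haK
      · exact haw.1.2.1 rfl
      · exact (hc a hva).2 w haw.1.1 haw.1.2.2 (haw.2.trans hca.symm)

theorem exists_p4Free_coloring [Fintype V] (G : SimpleGraph V) [DecidableRel G.Adj] {Δ : ℕ}
    (hΔ : ∀ v, G.degree v ≤ Δ) :
    ∃ f : Sym2 V → ℕ, (∀ e ∈ G.edgeSet, f e < Δ) ∧ ∀ i, (colorClass G f i).P4Free := by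
  classical
  induction hn : G.edgeFinset.card using Nat.strong_induction_on generalizing G with
  | _ n ih =>
  by_cases hedge : ∃ v, 0 < G.degree v
  · obtain ⟨v, hv⟩ := hedge
    have hlt : (G.deleteIncidenceSet v).edgeFinset.card < n := by
      have := G.degree_le_card_edgeFinset v
      rw [card_edgeFinset_deleteIncidenceSet]
      omega
    obtain ⟨f, hf, hfP4⟩ := ih _ hlt (G.deleteIncidenceSet v)
      (fun u => (degree_le_of_le (G.deleteIncidenceSet_le v)).trans (hΔ u)) rfl
    exact G.exists_recolorAt_p4Free hΔ v hf hfP4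
  · have hG (a b : V) : ¬ G.Adj a b := fun h =>
      hedge ⟨a, (G.degree_pos_iff_exists_adj a).mpr ⟨b, h⟩⟩
    refine ⟨fun _ => 0, fun e he => ?_, fun i a b _ _ hab _ => ?_⟩
    · induction e using Sym2.ind with
      | _ a b => exact (hG a b he).elim
    · exact (hG a b ((colorClass_adj G _ i).mp hab).1).elim

end SimpleGraph

/-- Every finite simple graph with maximum degree at most `Δ` can be edge-partitioned into
at most `Δ` star forests. -/
theorem star_arboricity_le_max_degree {V : Type*} [Fintype V] (G : SimpleGraph V)
    [DecidableRel G.Adj] (Δ : ℕ) (hΔ : ∀ v : V, G.degree v ≤ Δ) :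
    ∃ f : Sym2 V → ℕ, (∀ e ∈ G.edgeSet, f e < Δ) ∧
      ∀ i : ℕ, IsStarForest (colorClass G f i) := by
  obtain ⟨f, hf, hfP4⟩ := G.exists_p4Free_coloring hΔ
  exact ⟨f, hf, fun i => (hfP4 i).isStarForest⟩
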